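/- Perfect recall holds in POL: for any POL model M, state s, letter a ∈ Σ, agent i, and formula ψ, if M,s ⊨ ⟨a⟩K̂_i ψ then M,s ⊨ K̂_i⟨a⟩ψ. -/
import Mathlib


/-- The residual (left quotient) of a language `L` by a word `w`. -/
def resid {σ : Type} (L : Language σ) (w : List σ) : Language σ :=
  {u | w ++ u ∈ L}

/-- A POL model: a set of states, indistinguishability relations for each agent,
a valuation, and an expectation (a language over the observation alphabet)
attached to each state. -/
structure PModel (ι σ P S : Type) where
  states : Set S
  R : ι → S → S → Prop
  V : S → Set P
  Exp : S → Language σ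

namespace PModel

variable {ι σ P S : Type}

/-- A state survives observation of the word `w` if the residual of its
expectation by `w` is nonempty. -/
def survives (M : PModel ι σ P S) (w : List σ) (s : S) : Prop :=
  s ∈ M.states ∧ (resid (M.Exp s) w).Nonempty

/-- Model update by public observation of a word `w`: keep the surviving states,
restrict the relations (perfect recall), keep the valuation, and residuate the
expectations. -/
def update (M : PModel ι σ P S) (w : List σ) : PModel ι σ P S where
  states := {s | M.survives w s}
  R := fun i a b => M.R i a b ∧ M.survives w a ∧ M.survives w b
  V := M.V
  Exp := fun s => resid (M.Exp s) w

end PModel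

/-- POL formulas. -/
inductive Form (ι σ P : Type) : Type where
  | atom : P → Form ι σ P
  | neg : Form ι σ P → Form ι σ P
  | and : Form ι σ P → Form ι σ P → Form ι σ P
  | or : Form ι σ P → Form ι σ P → Form ι σ P
  | khat : ι → Form ι σ P → Form ι σ P
  | dia : RegularExpression σ → Form ι σ P → Form ι σ P

/-- Truth of a POL formula at a state of a POL model. -/
def sat {ι σ P S : Type} (M : PModel ι σ P S) (s : S) : Form ι σ P → Prop
  | .atom p => p ∈ M.V s
  | .neg φ => ¬ sat M s φ
  | .and φ ψ => sat M s φ ∧ sat M s ψ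
  | .or φ ψ => sat M s φ ∨ sat M s ψ
  | .khat i φ => ∃ t, M.R i s t ∧ sat M t φ
  | .dia π φ => ∃ w ∈ π.matches', (resid (M.Exp s) w).Nonempty ∧ sat (M.update w) s φ

/-- Perfect recall: `⟨a⟩K̂ᵢψ → K̂ᵢ⟨a⟩ψ`. -/
theorem perfect_recall {ι σ P S : Type} (M : PModel ι σ P S)
    (hR : ∀ i, Equivalence (M.R i)) (s : S) (a : σ) (i : ι) (ψ : Form ι σ P) :
    sat M s (.dia (RegularExpression.char a) (.khat i ψ)) →
      sat M s (.khat i (.dia (RegularExpression.char a) ψ)) := by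
  rintro ⟨w, hw, hne, t, ⟨hst, _, ht⟩, hψ⟩
  exact ⟨t, hst, w, hw, ht.2, hψ⟩
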